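/- Let u : ℝⁿ → ℝ be convex with gradient ∇u defined μ-a.e. for an absolutely continuous probability measure μ with finite second moment, and suppose (∇u)_♯ μ = ν. Then ∇u is an optimal transport map for the quadratic cost: for every measurable T with T_♯ μ = ν, ∫ ‖x − ∇u(x)‖² dμ ≤ ∫ ‖x − T(x)‖² dμ. -/

import Mathlib

open MeasureTheory ENNReal RealInnerProductSpace

/-- Squared quadratic Wasserstein distance, defined as the infimum over couplings. -/
noncomputable def W2sq {n : ℕ} (μ ν : Measure (EuclideanSpace ℝ (Fin n))) : ℝ≥0∞ :=
  ⨅ (π : Measure (EuclideanSpace ℝ (Fin n) × EuclideanSpace ℝ (Fin n)))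
    (_ : π.map Prod.fst = μ) (_ : π.map Prod.snd = ν),
    ∫⁻ p, (‖p.1 - p.2‖₊ : ℝ≥0∞) ^ 2 ∂π

/-- Quadratic Wasserstein distance. -/
noncomputable def W2 {n : ℕ} (μ ν : Measure (EuclideanSpace ℝ (Fin n))) : ℝ≥0∞ :=
  (W2sq μ ν) ^ (1/2 : ℝ)

/-- Finite second moment. -/
def FiniteSecondMoment {n : ℕ} (μ : Measure (EuclideanSpace ℝ (Fin n))) : Prop :=
  ∫⁻ x, (‖x‖₊ : ℝ≥0∞) ^ 2 ∂μ < ⊤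

section Aux

variable {n : ℕ}

local notation "E'" => EuclideanSpace ℝ (Fin n)

lemma subgrad {E : Type*} [NormedAddCommGroup E] [InnerProductSpace ℝ E] [CompleteSpace E]
    {u : E → ℝ} (hu : ConvexOn ℝ Set.univ u) {x g : E} (hx : HasGradientAt u g x) (y : E) :
    u x + ⟪g, y - x⟫ ≤ u y := by
  have hline : HasDerivAt (fun t : ℝ => x + t • (y - x)) (y - x) 0 := by
    simpa using ((hasDerivAt_id (0:ℝ)).smul_const (y - x)).const_add x
  have hfd : HasFDerivAt u (InnerProductSpace.toDual ℝ E g) x :=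
    hasGradientAt_iff_hasFDerivAt.mp hx
  have hfd' : HasFDerivAt u (InnerProductSpace.toDual ℝ E g) (x + (0:ℝ) • (y - x)) := by
    simpa using hfd
  have hc : HasDerivAt (fun t : ℝ => u (x + t • (y - x))) (⟪g, y - x⟫ : ℝ) 0 := by
    simpa [Function.comp_def] using hfd'.comp_hasDerivAt 0 hline
  have hconv : ConvexOn ℝ Set.univ (fun t : ℝ => u (x + t • (y - x))) := by
    have := hu.comp_affineMap (AffineMap.lineMap x y : ℝ →ᵃ[ℝ] E)
    simp only [Set.preimage_univ] at this
    convert this using 2 with t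
    exacts [rfl, rfl, rfl, rfl, by simp [AffineMap.lineMap_apply, add_comm]]
  have hs := hconv.le_slope_of_hasDerivAt (Set.mem_univ 0) (Set.mem_univ 1) one_pos hc
  rw [slope_def_field] at hs
  simp at hs
  linarith

lemma conv_ae_diff (u : E' → ℝ) (hu : ConvexOn ℝ Set.univ u) :
    ∀ᵐ x ∂(volume : Measure E'), DifferentiableAt ℝ u x := by
  have hll : LocallyLipschitz u := hu.locallyLipschitz
  rw [ae_iff]
  apply measure_null_of_locally_null
  intro x hx
  obtain ⟨K, t, ht, hlip⟩ := hll x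
  obtain ⟨ε, hε, hball⟩ := Metric.mem_nhds_iff.mp ht
  have hlipb : LipschitzOnWith K u (Metric.ball x ε) := hlip.mono hball
  have h1 : ∀ᵐ y ∂(volume : Measure E'),
      y ∈ Metric.ball x ε → DifferentiableWithinAt ℝ u (Metric.ball x ε) y :=
    hlipb.ae_differentiableWithinAt_of_mem
  refine ⟨Metric.ball x ε ∩ {y | ¬DifferentiableAt ℝ u y}, ?_, ?_⟩
  · exact Filter.inter_mem (nhdsWithin_le_nhds (Metric.ball_mem_nhds x hε))
      self_mem_nhdsWithin
  · rw [ae_iff] at h1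
    refine measure_mono_null (fun y hy => ?_) h1
    simp only [Set.mem_setOf_eq] at *
    exact fun h => hy.2 ((h hy.1).differentiableAt (Metric.isOpen_ball.mem_nhds hy.1))

lemma nnnorm_sq_coe (v : E') : (‖(‖v‖ ^ 2 : ℝ)‖₊ : ℝ≥0∞) = (‖v‖₊ : ℝ≥0∞) ^ 2 := by
  rw [← nnnorm_norm v]
  norm_cast
  rw [← nnnorm_pow]

lemma int_sq (μ : Measure E') {f : E' → E'} (hf : Measurable f)
    (h : ∫⁻ x, (‖f x‖₊ : ℝ≥0∞) ^ 2 ∂μ < ⊤) : Integrable (fun x => ‖f x‖ ^ 2) μ := by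
  refine ⟨(((hf.norm).pow_const 2).aestronglyMeasurable), ?_⟩
  rw [hasFiniteIntegral_def]
  rw [lintegral_congr (fun x => (enorm_eq_nnnorm _).trans (nnnorm_sq_coe (f x)))]
  exact h

lemma lint_eq_ofReal_int (μ : Measure E') {f : E' → E'}
    (h : Integrable (fun x => ‖f x‖ ^ 2) μ) :
    ∫⁻ x, (‖f x‖₊ : ℝ≥0∞) ^ 2 ∂μ = ENNReal.ofReal (∫ x, ‖f x‖ ^ 2 ∂μ) := by
  rw [MeasureTheory.ofReal_integral_eq_lintegral_ofReal h
    (Filter.Eventually.of_forall fun x => by positivity)]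
  refine lintegral_congr fun x => ?_
  rw [ENNReal.ofReal_pow (norm_nonneg _), ofReal_norm_eq_enorm, enorm_eq_nnnorm]

end Aux

theorem stmt15 (n : ℕ) (μ ν : Measure (EuclideanSpace ℝ (Fin n)))
    [IsProbabilityMeasure μ] [IsProbabilityMeasure ν]
    (hμ_ac : μ ≪ (volume : Measure (EuclideanSpace ℝ (Fin n))))
    (hμ : FiniteSecondMoment μ) (hν : FiniteSecondMoment ν)
    (u : EuclideanSpace ℝ (Fin n) → ℝ) (hu_conv : ConvexOn ℝ Set.univ u)
    (hgrad_meas : Measurable (fun x => gradient u x))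
    (hpush : μ.map (fun x => gradient u x) = ν) :
    ∀ T : EuclideanSpace ℝ (Fin n) → EuclideanSpace ℝ (Fin n),
      Measurable T → μ.map T = ν →
      ∫⁻ x, (‖x - gradient u x‖₊ : ℝ≥0∞) ^ 2 ∂μ ≤ ∫⁻ x, (‖x - T x‖₊ : ℝ≥0∞) ^ 2 ∂μ := by
  intro T hT hTpush
  set G : EuclideanSpace ℝ (Fin n) → EuclideanSpace ℝ (Fin n) := fun x => gradient u x with hG
  have hu_cont : Continuous u := hu_conv.locallyLipschitz.continuous
  -- a.e. differentiability
  have hGae : ∀ᵐ x ∂μ, HasGradientAt u (G x) x := by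
    filter_upwards [hμ_ac.ae_le (conv_ae_diff u hu_conv)] with x hx
    exact hx.hasGradientAt
  -- second moments
  have hnorm_sq_meas : Measurable (fun y : EuclideanSpace ℝ (Fin n) => (‖y‖₊ : ℝ≥0∞) ^ 2) :=
    (measurable_nnnorm.coe_nnreal_ennreal).pow_const 2
  have hG2 : ∫⁻ x, (‖G x‖₊ : ℝ≥0∞) ^ 2 ∂μ < ⊤ := by
    rw [← lintegral_map hnorm_sq_meas hgrad_meas, hpush]; exact hν
  have hT2 : ∫⁻ x, (‖T x‖₊ : ℝ≥0∞) ^ 2 ∂μ < ⊤ := by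
    rw [← lintegral_map hnorm_sq_meas hT, hTpush]; exact hν
  have hid2 : Integrable (fun x : EuclideanSpace ℝ (Fin n) => ‖x‖ ^ 2) μ := int_sq μ measurable_id hμ
  have hGsq : Integrable (fun x => ‖G x‖ ^ 2) μ := int_sq μ hgrad_meas hG2
  have hTsq : Integrable (fun x => ‖T x‖ ^ 2) μ := int_sq μ hT hT2
  -- integrability of combined squares
  have hdom : Integrable (fun x : EuclideanSpace ℝ (Fin n) => 2 * ‖x‖ ^ 2 + 2 * ‖G x‖ ^ 2) μ :=
    (hid2.const_mul 2).add (hGsq.const_mul 2)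
  have hdomT : Integrable (fun x : EuclideanSpace ℝ (Fin n) => 2 * ‖x‖ ^ 2 + 2 * ‖T x‖ ^ 2) μ :=
    (hid2.const_mul 2).add (hTsq.const_mul 2)
  have key_bound : ∀ (f : EuclideanSpace ℝ (Fin n) → EuclideanSpace ℝ (Fin n)) (x : EuclideanSpace ℝ (Fin n)) (s : ℝ), s = 1 ∨ s = -1 →
      ‖(‖x + s • f x‖ ^ 2 : ℝ)‖ ≤ 2 * ‖x‖ ^ 2 + 2 * ‖f x‖ ^ 2 := by
    intro f x s hs
    have h1 : ‖x + s • f x‖ ≤ ‖x‖ + ‖f x‖ := by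
      calc ‖x + s • f x‖ ≤ ‖x‖ + ‖s • f x‖ := norm_add_le _ _
        _ = ‖x‖ + ‖f x‖ := by rcases hs with h | h <;> simp [h, norm_smul]
    rw [Real.norm_eq_abs, abs_of_nonneg (by positivity)]
    nlinarith [pow_le_pow_left₀ (norm_nonneg (x + s • f x)) h1 2,
      sq_nonneg (‖x‖ - ‖f x‖), norm_nonneg (x + s • f x), norm_nonneg x, norm_nonneg (f x)]
  have haddG : Integrable (fun x => ‖x + G x‖ ^ 2) μ := by
    refine Integrable.mono' hdom
      ((measurable_id.add hgrad_meas).norm.pow_const 2).aestronglyMeasurable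
      (Filter.Eventually.of_forall fun x => ?_)
    simpa using key_bound G x 1 (Or.inl rfl)
  have haddT : Integrable (fun x => ‖x + T x‖ ^ 2) μ := by
    refine Integrable.mono' hdomT
      ((measurable_id.add hT).norm.pow_const 2).aestronglyMeasurable
      (Filter.Eventually.of_forall fun x => ?_)
    simpa using key_bound T x 1 (Or.inl rfl)
  have hsubG : Integrable (fun x => ‖x - G x‖ ^ 2) μ := by
    refine Integrable.mono' hdom
      ((measurable_id.sub hgrad_meas).norm.pow_const 2).aestronglyMeasurable
      (Filter.Eventually.of_forall fun x => ?_)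
    simpa [sub_eq_add_neg] using key_bound G x (-1) (Or.inr rfl)
  have hsubT : Integrable (fun x => ‖x - T x‖ ^ 2) μ := by
    refine Integrable.mono' hdomT
      ((measurable_id.sub hT).norm.pow_const 2).aestronglyMeasurable
      (Filter.Eventually.of_forall fun x => ?_)
    simpa [sub_eq_add_neg] using key_bound T x (-1) (Or.inr rfl)
  -- MAIN INEQUALITY on ∫ ‖x + ·‖²
  have main : ∫ x, ‖x + T x‖ ^ 2 ∂μ ≤ ∫ x, ‖x + G x‖ ^ 2 ∂μ := by
    classical
    obtain ⟨d, hd⟩ : ∃ d : ℕ → EuclideanSpace ℝ (Fin n), DenseRange d :=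
      ⟨TopologicalSpace.denseSeq _, TopologicalSpace.denseRange_denseSeq _⟩
    set g : ℕ → EuclideanSpace ℝ (Fin n) → ℝ := fun k y => ⟪d k, y⟫ - u (d k) with hgdef
    set w : EuclideanSpace ℝ (Fin n) → ℝ := fun y => ⨆ k, g k y with hwdef
    have hgcont : ∀ k, Continuous (g k) :=
      fun k => (continuous_const.inner continuous_id).sub continuous_const
    have hwmeas : Measurable w := Measurable.iSup fun k => (hgcont k).measurable
    set A : Set (EuclideanSpace ℝ (Fin n)) := {y | BddAbove (Set.range fun k => g k y)}
      with hAdef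
    have hub : ∀ y ∈ A, ∀ x, ⟪x, y⟫ - u x ≤ w y := by
      intro y hy x
      have hclosed : IsClosed {x : EuclideanSpace ℝ (Fin n) | ⟪x, y⟫ - u x ≤ w y} :=
        isClosed_le ((continuous_id.inner continuous_const).sub hu_cont) continuous_const
      have hrange : Set.range d ⊆ {x : EuclideanSpace ℝ (Fin n) | ⟪x, y⟫ - u x ≤ w y} := by
        rintro _ ⟨k, rfl⟩
        exact le_ciSup hy k
      have hx : x ∈ closure (Set.range d) := by
        rw [hd.closure_range]; trivial
      exact hclosed.closure_subset (closure_mono hrange hx)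
    have hgood : ∀ x, HasGradientAt u (G x) x →
        G x ∈ A ∧ w (G x) = ⟪x, G x⟫ - u x := by
      intro x hx
      have hb : ∀ x', ⟪x', G x⟫ - u x' ≤ ⟪x, G x⟫ - u x := by
        intro x'
        have hsg := subgrad hu_conv hx x'
        have hinner : ⟪G x, x' - x⟫ = ⟪x', G x⟫ - ⟪x, G x⟫ := by
          rw [inner_sub_right, real_inner_comm (G x) x', real_inner_comm (G x) x]
        linarith
      have hA : G x ∈ A := ⟨⟪x, G x⟫ - u x, by rintro _ ⟨k, rfl⟩; exact hb (d k)⟩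
      exact ⟨hA, le_antisymm (ciSup_le fun k => hb (d k)) (hub _ hA x)⟩
    have hAmeas : MeasurableSet A := by
      have hA_eq : A = ⋃ M : ℕ, ⋂ k : ℕ, {y | g k y ≤ (M : ℝ)} := by
        ext y
        constructor
        · rintro ⟨c, hc⟩
          obtain ⟨M, hM⟩ := exists_nat_ge c
          exact Set.mem_iUnion.mpr ⟨M, Set.mem_iInter.mpr fun k =>
            le_trans (hc ⟨k, rfl⟩) hM⟩
        · intro hy
          obtain ⟨M, hM⟩ := Set.mem_iUnion.mp hy
          exact ⟨M, by rintro _ ⟨k, rfl⟩; exact Set.mem_iInter.mp hM k⟩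
      rw [hA_eq]
      exact MeasurableSet.iUnion fun M => MeasurableSet.iInter fun k =>
        measurableSet_le (hgcont k).measurable measurable_const
    have hμG_A : ∀ᵐ x ∂μ, G x ∈ A := hGae.mono fun x hx => (hgood x hx).1
    have hνA : ν Aᶜ = 0 := by
      rw [← hpush, Measure.map_apply hgrad_meas hAmeas.compl]
      exact ae_iff.mp hμG_A
    have hTA : ∀ᵐ x ∂μ, T x ∈ A := by
      have h0 : μ (T ⁻¹' Aᶜ) = 0 := by
        rw [← Measure.map_apply hT hAmeas.compl, hTpush]; exact hνA
      rw [ae_iff]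
      exact h0
    obtain ⟨x₀, hx₀⟩ := hGae.exists
    obtain ⟨a, hadef⟩ : ∃ a' : EuclideanSpace ℝ (Fin n) → ℝ,
        a' = fun x => u x + ‖x‖ ^ 2 / 2 := ⟨_, rfl⟩
    obtain ⟨b, hbdef⟩ : ∃ b' : EuclideanSpace ℝ (Fin n) → ℝ,
        b' = fun y => w y + ‖y‖ ^ 2 / 2 := ⟨_, rfl⟩
    have hameas : Measurable a := by
      rw [hadef]
      exact hu_cont.measurable.add ((measurable_norm.pow_const 2).div_const 2)
    have hbmeas : Measurable b := by
      rw [hbdef]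
      exact hwmeas.add ((measurable_norm.pow_const 2).div_const 2)
    have hx₀A : G x₀ ∈ A := (hgood x₀ hx₀).1
    have hw₀ : w (G x₀) = ⟪x₀, G x₀⟫ - u x₀ := (hgood x₀ hx₀).2
    obtain ⟨ca, hcadef⟩ : ∃ c : ℝ, c = -‖G x₀‖ ^ 2 / 2 - w (G x₀) := ⟨_, rfl⟩
    have ha_lb : ∀ x, ca ≤ a x := by
      intro x
      have h1 : ⟪x, G x₀⟫ - u x ≤ w (G x₀) := hub _ hx₀A x
      have h2 : |⟪x, G x₀⟫| ≤ ‖x‖ * ‖G x₀‖ := abs_real_inner_le_norm x (G x₀)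
      have h3 := neg_abs_le (⟪x, G x₀⟫ : ℝ)
      simp only [hadef, hcadef]
      nlinarith [sq_nonneg (‖x‖ - ‖G x₀‖)]
    obtain ⟨cb, hcbdef⟩ : ∃ c : ℝ, c = -‖x₀‖ ^ 2 / 2 - u x₀ := ⟨_, rfl⟩
    have hb_lb : ∀ y ∈ A, cb ≤ b y := by
      intro y hy
      have h1 : ⟪x₀, y⟫ - u x₀ ≤ w y := hub y hy x₀
      have h2 : |⟪x₀, y⟫| ≤ ‖x₀‖ * ‖y‖ := abs_real_inner_le_norm x₀ y
      have h3 := neg_abs_le (⟪x₀, y⟫ : ℝ)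
      simp only [hbdef, hcbdef]
      nlinarith [sq_nonneg (‖x₀‖ - ‖y‖)]
    have hP1 : ∀ᵐ x ∂μ, a x + b (G x) = ‖x + G x‖ ^ 2 / 2 := by
      filter_upwards [hGae] with x hx
      have h := (hgood x hx).2
      have hn := norm_add_sq_real x (G x)
      simp only [hadef, hbdef]
      linarith
    have haint : Integrable a μ := by
      refine Integrable.mono' ((haddG.div_const 2).add (integrable_const (|ca| + |cb|)))
        hameas.aestronglyMeasurable ?_
      filter_upwards [hP1, hμG_A] with x h1 h2
      rw [Real.norm_eq_abs, abs_le]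
      simp only [Pi.add_apply]
      have hblb := hb_lb (G x) h2
      have h4 := ha_lb x
      have h5 : (0:ℝ) ≤ ‖x + G x‖ ^ 2 / 2 := by positivity
      constructor
      · linarith [neg_abs_le ca, abs_nonneg cb, abs_nonneg ca]
      · linarith [neg_abs_le cb, abs_nonneg ca, abs_nonneg cb]
    have hbGint : Integrable (fun x => b (G x)) μ := by
      refine ((haddG.div_const 2).sub haint).congr ?_
      filter_upwards [hP1] with x h1
      simp only [Pi.sub_apply]
      linarith
    have hbTint : Integrable (fun x => b (T x)) μ :=
      (integrable_map_measure hbmeas.aestronglyMeasurable hT.aemeasurable).mp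
        (by rw [hTpush, ← hpush]
            exact (integrable_map_measure hbmeas.aestronglyMeasurable
              hgrad_meas.aemeasurable).mpr hbGint)
    have hbT_eq : ∫ x, b (T x) ∂μ = ∫ x, b (G x) ∂μ := by
      rw [← integral_map hT.aemeasurable hbmeas.aestronglyMeasurable,
          ← integral_map hgrad_meas.aemeasurable hbmeas.aestronglyMeasurable,
          hTpush, hpush]
    have hP2 : ∀ᵐ x ∂μ, ‖x + T x‖ ^ 2 / 2 ≤ a x + b (T x) := by
      filter_upwards [hTA] with x hx
      have h1 : ⟪x, T x⟫ - u x ≤ w (T x) := hub _ hx x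
      have hn := norm_add_sq_real x (T x)
      simp only [hadef, hbdef]
      linarith
    have h3 : ∫ x, ‖x + T x‖ ^ 2 / 2 ∂μ ≤ ∫ x, (a x + b (T x)) ∂μ :=
      integral_mono_ae (haddT.div_const 2) (haint.add hbTint) hP2
    have h4 : ∫ x, (a x + b (T x)) ∂μ = ∫ x, (a x + b (G x)) ∂μ := by
      rw [integral_add haint hbTint, integral_add haint hbGint, hbT_eq]
    have h5 : ∫ x, (a x + b (G x)) ∂μ = ∫ x, ‖x + G x‖ ^ 2 / 2 ∂μ :=
      integral_congr_ae hP1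
    have h6 := h3.trans (le_of_eq (h4.trans h5))
    rw [integral_div, integral_div] at h6
    linarith
  -- change of variables for second moments
  have hGT : ∫ x, ‖G x‖ ^ 2 ∂μ = ∫ x, ‖T x‖ ^ 2 ∂μ := by
    have h1 : ∫ x, ‖G x‖ ^ 2 ∂μ = ∫ y, ‖y‖ ^ 2 ∂ν := by
      rw [← hpush, integral_map hgrad_meas.aemeasurable]
      exact (continuous_norm.pow 2).aestronglyMeasurable
    have h2 : ∫ x, ‖T x‖ ^ 2 ∂μ = ∫ y, ‖y‖ ^ 2 ∂ν := by
      rw [← hTpush, integral_map hT.aemeasurable]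
      exact (continuous_norm.pow 2).aestronglyMeasurable
    rw [h1, h2]
  -- parallelogram law pointwise
  have hpar : ∀ (y z : EuclideanSpace ℝ (Fin n)), ‖y - z‖ ^ 2 = 2 * ‖y‖ ^ 2 + 2 * ‖z‖ ^ 2 - ‖y + z‖ ^ 2 := by
    intro y z
    have := norm_add_sq_real y z
    have h2 := norm_sub_sq_real y z
    linarith
  -- final real inequality
  have finalreal : ∫ x, ‖x - G x‖ ^ 2 ∂μ ≤ ∫ x, ‖x - T x‖ ^ 2 ∂μ := by
    have e1 : ∫ x, ‖x - G x‖ ^ 2 ∂μ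
        = 2 * ∫ x, ‖x‖ ^ 2 ∂μ + 2 * ∫ x, ‖G x‖ ^ 2 ∂μ - ∫ x, ‖x + G x‖ ^ 2 ∂μ := by
      rw [← integral_const_mul, ← integral_const_mul, ← integral_add (hid2.const_mul 2)
        (hGsq.const_mul 2), ← integral_sub (by exact hdom) haddG]
      exact integral_congr_ae (Filter.Eventually.of_forall fun x => by
        simpa using hpar x (G x))
    have e2 : ∫ x, ‖x - T x‖ ^ 2 ∂μ
        = 2 * ∫ x, ‖x‖ ^ 2 ∂μ + 2 * ∫ x, ‖T x‖ ^ 2 ∂μ - ∫ x, ‖x + T x‖ ^ 2 ∂μ := by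
      rw [← integral_const_mul, ← integral_const_mul, ← integral_add (hid2.const_mul 2)
        (hTsq.const_mul 2), ← integral_sub (by exact hdomT) haddT]
      exact integral_congr_ae (Filter.Eventually.of_forall fun x => by
        simpa using hpar x (T x))
    rw [e1, e2, hGT]
    linarith
  -- convert to lintegrals
  calc ∫⁻ x, (‖x - gradient u x‖₊ : ℝ≥0∞) ^ 2 ∂μ
      = ENNReal.ofReal (∫ x, ‖x - G x‖ ^ 2 ∂μ) := by
        exact lint_eq_ofReal_int μ (f := fun x => x - G x) hsubG
    _ ≤ ENNReal.ofReal (∫ x, ‖x - T x‖ ^ 2 ∂μ) := ENNReal.ofReal_le_ofReal finalreal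
    _ = ∫⁻ x, (‖x - T x‖₊ : ℝ≥0∞) ^ 2 ∂μ :=
        (lint_eq_ofReal_int μ (f := fun x => x - T x) hsubT).symm
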